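/- arXiv:2311.14221 — 4 statements merged into one kernel-verified Lean document; each statement's English description precedes it below -/
import Mathlib

section
/- Let C be a monoidal category, B a right C-module category that is monoidal with compatibility isomorphisms l_{B,X} : B ◁ X → B ⊗ (1 ◁ X) satisfying the pentagon-type coherence. Then for every object A of B, the functor L_A : B → B, L_A(B) = A ⊗ B, is a C-module functor with structure maps η_{B,V} = l_{A⊗B,V}^{-1} ∘ (id_A ⊗ l_{B,V}) : A ⊗ (B ◁ V) → (A ⊗ B) ◁ V; in particular η satisfies the module-functor coherence η_{B,V⊗W} followed by associativity equals (η_{B,V} ◁ id_W) ∘ η_{B◁V,W}. -/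
/-!
Compose both sides with the isomorphism `l₂ : ((A ⊗ b) ◁ v) ◁ w ≅ (A ⊗ b) ⊗ (𝟙 ◁ v ⊗ 𝟙 ◁ w)`
built from `l`. The coherence axiom of `l` says that `massoc c v w ≫ l₂ c v w` equals
`l c (v ⊗ w) ≫ c ◁ φ` with `φ` independent of `c`; applying it once to `b` (under `A ◁ -`)
and once to `A ⊗ b` reduces the claim to naturality of `l` and the pentagon in `B`.
-/

open CategoryTheory MonoidalCategory

namespace Stmt12

/-- A right module category structure of a monoidal category `C` on a category `B`. -/
structure RightModCat (C B : Type*) [Category C] [Category B] [MonoidalCategory C] where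
  act : B → C → B
  actMap : ∀ {b b' : B} {x x' : C}, (b ⟶ b') → (x ⟶ x') → (act b x ⟶ act b' x')
  actMap_id : ∀ (b : B) (x : C), actMap (𝟙 b) (𝟙 x) = 𝟙 (act b x)
  actMap_comp : ∀ {b₁ b₂ b₃ : B} {x₁ x₂ x₃ : C} (f : b₁ ⟶ b₂) (f' : b₂ ⟶ b₃)
    (g : x₁ ⟶ x₂) (g' : x₂ ⟶ x₃),
    actMap (f ≫ f') (g ≫ g') = actMap f g ≫ actMap f' g'
  massoc : ∀ (b : B) (x y : C), act b (x ⊗ y) ≅ act (act b x) y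
  massoc_natural : ∀ {b b' : B} {x x' y y' : C} (f : b ⟶ b') (g : x ⟶ x') (h : y ⟶ y'),
    actMap f (g ⊗ₘ h) ≫ (massoc b' x' y').hom = (massoc b x y).hom ≫ actMap (actMap f g) h
  runit : ∀ b : B, act b (𝟙_ C) ≅ b
  runit_natural : ∀ {b b' : B} (f : b ⟶ b'),
    actMap f (𝟙 (𝟙_ C)) ≫ (runit b').hom = (runit b).hom ≫ f
  pentagon : ∀ (b : B) (x y z : C),
    actMap (𝟙 b) (α_ x y z).hom ≫ (massoc b x (y ⊗ z)).hom ≫ (massoc (act b x) y z).hom =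
      (massoc b (x ⊗ y) z).hom ≫ actMap (massoc b x y).hom (𝟙 z)
  unit_act : ∀ (b : B) (x : C),
    (massoc b (𝟙_ C) x).hom ≫ actMap (runit b).hom (𝟙 x) = actMap (𝟙 b) (λ_ x).hom

/-- A *monoidal* right `C`-module category: a monoidal category `B` with a right
`C`-module structure together with compatibility isomorphisms
`l_{b,x} : b ◁ x ≅ b ⊗ (𝟙_B ◁ x)` satisfying the coherence axioms. -/
structure MonModCat (C B : Type*) [Category C] [Category B] [MonoidalCategory C]
    [MonoidalCategory B] extends RightModCat C B where
  l : ∀ (b : B) (x : C), act b x ≅ b ⊗ act (𝟙_ B) x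
  l_natural : ∀ {b b' : B} {x x' : C} (f : b ⟶ b') (g : x ⟶ x'),
    actMap f g ≫ (l b' x').hom = (l b x).hom ≫ (f ⊗ₘ actMap (𝟙 (𝟙_ B)) g)
  l_unit_right : ∀ b : B,
    (l b (𝟙_ C)).hom = (runit b).hom ≫ (ρ_ b).inv ≫ (𝟙 b ⊗ₘ (runit (𝟙_ B)).inv)
  l_unit_left : ∀ x : C, (l (𝟙_ B) x).hom = (λ_ (act (𝟙_ B) x)).inv
  l_coherence : ∀ (b : B) (x y : C),
    (l (act b x) y).hom ≫ ((l b x).hom ⊗ₘ 𝟙 (act (𝟙_ B) y)) ≫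
        (α_ b (act (𝟙_ B) x) (act (𝟙_ B) y)).hom =
      (massoc b x y).inv ≫ (l b (x ⊗ y)).hom ≫ (𝟙 b ⊗ₘ (massoc (𝟙_ B) x y).hom) ≫
        (𝟙 b ⊗ₘ (l (act (𝟙_ B) x) y).hom)

variable {C B : Type*} [Category C] [Category B] [MonoidalCategory C] [MonoidalCategory B]

/-- The module-functor structure map
`η_{b,v} = l⁻¹_{A⊗b,v} ∘ (id_A ⊗ l_{b,v}) : A ⊗ (b ◁ v) ⟶ (A ⊗ b) ◁ v`
of the functor `L_A = A ⊗ -`. -/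
def ηLA (M : MonModCat C B) (A b : B) (v : C) : A ⊗ M.act b v ⟶ M.act (A ⊗ b) v :=
  (𝟙 A ⊗ₘ (M.l b v).hom) ≫ (α_ A b (M.act (𝟙_ B) v)).inv ≫ (M.l (A ⊗ b) v).inv

namespace MonModCat

variable (M : MonModCat C B)

lemma actMap_id_comp_l_hom {b b' : B} (f : b ⟶ b') (x : C) :
    M.actMap f (𝟙 x) ≫ (M.l b' x).hom = (M.l b x).hom ≫ (f ▷ M.act (𝟙_ B) x) := by
  simpa [M.actMap_id] using M.l_natural f (𝟙 x)

def l₂ (b : B) (v w : C) : M.act (M.act b v) w ≅ b ⊗ (M.act (𝟙_ B) v ⊗ M.act (𝟙_ B) w) :=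
  M.l (M.act b v) w ≪≫ whiskerRightIso (M.l b v) _ ≪≫ α_ _ _ _

lemma massoc_hom_comp_l₂_hom (b : B) (v w : C) :
    (M.massoc b v w).hom ≫ (M.l₂ b v w).hom =
      (M.l b (v ⊗ w)).hom ≫ b ◁ ((M.massoc (𝟙_ B) v w).hom ≫ (M.l (M.act (𝟙_ B) v) w).hom) := by
  simpa [l₂] using (Iso.eq_inv_comp _).mp (M.l_coherence b v w)

end MonModCat

lemma ηLA_comp_l_hom (M : MonModCat C B) (A b : B) (v : C) :
    ηLA M A b v ≫ (M.l (A ⊗ b) v).hom = A ◁ (M.l b v).hom ≫ (α_ A b _).inv := by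
  simp [ηLA]

/-- For a monoidal right `C`-module category `B` and `A ∈ B`, the functor `L_A = A ⊗ -`
with structure maps `η` is a `C`-module functor: `η` satisfies the module-functor
coherence axiom. -/
theorem LA_module_functor (M : MonModCat C B) (A : B) (b : B) (v w : C) :
    (𝟙 A ⊗ₘ (M.massoc b v w).hom) ≫ ηLA M A (M.act b v) w ≫ M.actMap (ηLA M A b v) (𝟙 w) =
      ηLA M A b (v ⊗ w) ≫ (M.massoc (A ⊗ b) v w).hom := by
  set φ := (M.massoc (𝟙_ B) v w).hom ≫ (M.l (M.act (𝟙_ B) v) w).hom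
  rw [← cancel_mono (M.l₂ (A ⊗ b) v w).hom]
  calc _ = A ◁ (M.massoc b v w).hom ≫ ηLA M A (M.act b v) w ≫ (M.l _ w).hom ≫
          (ηLA M A b v ≫ (M.l (A ⊗ b) v).hom) ▷ _ ≫ (α_ _ _ _).hom := by
        simp [MonModCat.l₂, reassoc_of% M.actMap_id_comp_l_hom]
    _ = A ◁ ((M.massoc b v w).hom ≫ (M.l₂ b v w).hom) ≫ (α_ A b _).inv := by
        rw [reassoc_of% ηLA_comp_l_hom, ηLA_comp_l_hom]
        simp only [MonModCat.l₂, Iso.trans_hom, whiskerRightIso_hom, whiskerLeft_comp,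
          comp_whiskerRight, Category.assoc]
        rw [← associator_inv_naturality_middle_assoc, pentagon_inv_inv_hom_hom_inv]
    _ = A ◁ (M.l b (v ⊗ w)).hom ≫ (α_ A b _).inv ≫ (A ⊗ b) ◁ φ := by
        rw [M.massoc_hom_comp_l₂_hom]
        simp [φ]
    _ = _ := by
        rw [Category.assoc, M.massoc_hom_comp_l₂_hom, reassoc_of% ηLA_comp_l_hom]

end Stmt12
end

section
/- Let C, B be monoidal categories and suppose B carries a right C-module structure making it a monoidal right C-module category (with compatibility isomorphisms l). Then G : C → B, G(V) = 1_B ◁ V, equipped with the isomorphisms l^{-1}_{1◁V, W} : G(V) ⊗ G(W) → G(V ⊗ W), is a monoidal functor; i.e., these isomorphisms satisfy the monoidal functor coherence ξ_{A,B⊗C} ∘ (id ⊗ ξ_{B,C}) = ξ_{A⊗B,C} ∘ (ξ_{A,B} ⊗ id). -/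
/-!
Unfolding `Gμ`, the module pentagon and the naturality of `l` reduce the left-hand side to
`(l⁻¹_{G V, W} ▷ G U) ≫ l⁻¹_{G V ◁ W, U} ≫ m⁻¹_{G V, W, U}` followed by `m⁻¹_{𝟙, V, W ⊗ U}`.
The coherence axiom of `l` at `b = G V`, read with all arrows inverted, rewrites this as
`α ≫ (G V ◁ Gμ W U) ≫ l⁻¹_{G V, W ⊗ U}`, which is the right-hand side.
-/

open CategoryTheory MonoidalCategory

namespace Stmt14

structure RightModCat (C B : Type*) [Category C] [Category B] [MonoidalCategory C] where
  act : B → C → B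
  actMap : ∀ {b b' : B} {x x' : C}, (b ⟶ b') → (x ⟶ x') → (act b x ⟶ act b' x')
  actMap_id : ∀ (b : B) (x : C), actMap (𝟙 b) (𝟙 x) = 𝟙 (act b x)
  actMap_comp : ∀ {b₁ b₂ b₃ : B} {x₁ x₂ x₃ : C} (f : b₁ ⟶ b₂) (f' : b₂ ⟶ b₃)
    (g : x₁ ⟶ x₂) (g' : x₂ ⟶ x₃),
    actMap (f ≫ f') (g ≫ g') = actMap f g ≫ actMap f' g'
  massoc : ∀ (b : B) (x y : C), act b (x ⊗ y) ≅ act (act b x) y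
  massoc_natural : ∀ {b b' : B} {x x' y y' : C} (f : b ⟶ b') (g : x ⟶ x') (h : y ⟶ y'),
    actMap f (g ⊗ₘ h) ≫ (massoc b' x' y').hom = (massoc b x y).hom ≫ actMap (actMap f g) h
  runit : ∀ b : B, act b (𝟙_ C) ≅ b
  runit_natural : ∀ {b b' : B} (f : b ⟶ b'),
    actMap f (𝟙 (𝟙_ C)) ≫ (runit b').hom = (runit b).hom ≫ f
  pentagon : ∀ (b : B) (x y z : C),
    actMap (𝟙 b) (α_ x y z).hom ≫ (massoc b x (y ⊗ z)).hom ≫ (massoc (act b x) y z).hom =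
      (massoc b (x ⊗ y) z).hom ≫ actMap (massoc b x y).hom (𝟙 z)
  unit_act : ∀ (b : B) (x : C),
    (massoc b (𝟙_ C) x).hom ≫ actMap (runit b).hom (𝟙 x) = actMap (𝟙 b) (λ_ x).hom

/-- A *monoidal* right `C`-module category: a monoidal category `B` with a right
`C`-module structure together with compatibility isomorphisms
`l_{b,x} : b ◁ x ≅ b ⊗ (𝟙_B ◁ x)` satisfying the coherence axioms. -/
structure MonModCat (C B : Type*) [Category C] [Category B] [MonoidalCategory C]
    [MonoidalCategory B] extends RightModCat C B where
  l : ∀ (b : B) (x : C), act b x ≅ b ⊗ act (𝟙_ B) x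
  l_natural : ∀ {b b' : B} {x x' : C} (f : b ⟶ b') (g : x ⟶ x'),
    actMap f g ≫ (l b' x').hom = (l b x).hom ≫ (f ⊗ₘ actMap (𝟙 (𝟙_ B)) g)
  l_unit_right : ∀ b : B,
    (l b (𝟙_ C)).hom = (runit b).hom ≫ (ρ_ b).inv ≫ (𝟙 b ⊗ₘ (runit (𝟙_ B)).inv)
  l_unit_left : ∀ x : C, (l (𝟙_ B) x).hom = (λ_ (act (𝟙_ B) x)).inv
  l_coherence : ∀ (b : B) (x y : C),
    (l (act b x) y).hom ≫ ((l b x).hom ⊗ₘ 𝟙 (act (𝟙_ B) y)) ≫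
        (α_ b (act (𝟙_ B) x) (act (𝟙_ B) y)).hom =
      (massoc b x y).inv ≫ (l b (x ⊗ y)).hom ≫ (𝟙 b ⊗ₘ (massoc (𝟙_ B) x y).hom) ≫
        (𝟙 b ⊗ₘ (l (act (𝟙_ B) x) y).hom)

variable {C B : Type*} [Category C] [Category B] [MonoidalCategory C] [MonoidalCategory B]

/-- The monoidal structure map `l⁻¹_{𝟙◁V,W} : G(V) ⊗ G(W) ⟶ G(V ⊗ W)` of the functor
`G(V) = 𝟙_B ◁ V` (composed with the module associator in the non-strict setting). -/
def Gμ (M : MonModCat C B) (V W : C) :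
    M.act (𝟙_ B) V ⊗ M.act (𝟙_ B) W ⟶ M.act (𝟙_ B) (V ⊗ W) :=
  (M.l (M.act (𝟙_ B) V) W).inv ≫ (M.massoc (𝟙_ B) V W).inv

namespace RightModCat

variable {D : Type*} [Category D] (M : RightModCat C D)

theorem massoc_inv_comp_actMap_associator_hom (b : D) (x y z : C) :
    (M.massoc b (x ⊗ y) z).inv ≫ M.actMap (𝟙 b) (α_ x y z).hom =
      M.actMap (M.massoc b x y).hom (𝟙 z) ≫ (M.massoc (M.act b x) y z).inv ≫
        (M.massoc b x (y ⊗ z)).inv := by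
  rw [Iso.inv_comp_eq, ← reassoc_of% (M.pentagon b x y z)]
  simp

theorem actMap_inv_comp_actMap_hom {b b' : D} (e : b ≅ b') (x : C) :
    M.actMap e.inv (𝟙 x) ≫ M.actMap e.hom (𝟙 x) = 𝟙 (M.act b' x) := by
  rw [← M.actMap_comp, e.inv_hom_id, Category.comp_id, M.actMap_id]

end RightModCat

namespace MonModCat

variable (M : MonModCat C B)

theorem whiskerRight_comp_l_inv {b b' : B} (f : b ⟶ b') (x : C) :
    f ▷ M.act (𝟙_ B) x ≫ (M.l b' x).inv = (M.l b x).inv ≫ M.actMap f (𝟙 x) := by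
  rw [Iso.comp_inv_eq, Category.assoc, M.l_natural, Iso.inv_hom_id_assoc, M.actMap_id,
    tensorHom_id]

theorem l_inv_whiskerRight_comp_l_inv_comp_massoc_inv (b : B) (x y : C) :
    (M.l b x).inv ▷ M.act (𝟙_ B) y ≫ (M.l (M.act b x) y).inv ≫ (M.massoc b x y).inv =
      (α_ b _ _).hom ≫ b ◁ Gμ M x y ≫ (M.l b (x ⊗ y)).inv := by
  have h := M.l_coherence b x y
  simp only [tensorHom_id, id_tensorHom] at h
  rw [← cancel_epi ((M.l b x).hom ▷ _), ← cancel_epi (M.l (M.act b x) y).hom,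
    reassoc_of% h]
  simp [Gμ]

end MonModCat

/-- For a monoidal right `C`-module category `B`, the functor `G : C ⥤ B`,
`G(V) = 𝟙_B ◁ V`, equipped with the isomorphisms `l⁻¹_{𝟙◁V,W}`, is a monoidal functor:
the structure maps satisfy the monoidal functor coherence axiom. -/
theorem G_monoidal (M : MonModCat C B) (V W U : C) :
    (Gμ M V W ⊗ₘ 𝟙 (M.act (𝟙_ B) U)) ≫ Gμ M (V ⊗ W) U ≫
        M.actMap (𝟙 (𝟙_ B)) (α_ V W U).hom =
      (α_ (M.act (𝟙_ B) V) (M.act (𝟙_ B) W) (M.act (𝟙_ B) U)).hom ≫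
        (𝟙 (M.act (𝟙_ B) V) ⊗ₘ Gμ M W U) ≫ Gμ M V (W ⊗ U) := by
  have hμ := M.l_inv_whiskerRight_comp_l_inv_comp_massoc_inv (M.act (𝟙_ B) V) W U
  rw [tensorHom_id, id_tensorHom, Gμ, Gμ, Category.assoc,
    M.massoc_inv_comp_actMap_associator_hom, comp_whiskerRight, Category.assoc,
    reassoc_of% (M.whiskerRight_comp_l_inv _ U),
    reassoc_of% (M.actMap_inv_comp_actMap_hom _ U), reassoc_of% hμ]
  rfl

end Stmt14
end

section
/- Let C, B be monoidal categories, (F, ξ, c) : B → C a monoidal C-module functor on a monoidal right C-module category B satisfying the compatibility l_{F(B),V} ∘ c_{B,V} = (id_{F(B)} ⊗ c_{1,V}) ∘ ξ^{-1}_{B, 1◁V} ∘ F(l_{B,V}). Then the natural isomorphisms α_V := c_{1,V} : F(1_B ◁ V) → V form a monoidal natural isomorphism F ∘ G ≅ Id_C, where G(V) = 1_B ◁ V with monoidal structure l^{-1}_{1◁V,W}; i.e., c_{1,V} ⊗ c_{1,W} = c_{1, V⊗W} ∘ F(l^{-1}_{1◁V,W}) ∘ ξ_{1◁V, 1◁W}.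 -/
/-!
Write `α_V = c_{𝟙,V} ≫ (ε⁻¹ ▷ V) ≫ λ_V`. The compatibility of `ξ`, `c` and `l`, solved for `F(l⁻¹)`,
says that `ξ ≫ F(l⁻¹_{𝟙◁V,W})` is `F(𝟙◁V) ◁ α_W ≫ c⁻¹_{𝟙◁V,W}`; the module coherence of `c`,
solved for `F(massoc⁻¹)`, turns `c⁻¹_{𝟙◁V,W} ≫ F(massoc⁻¹)` into `c_{𝟙,V} ▷ W ≫ (associator) ≫ c⁻¹_{𝟙,V⊗W}`.
After these two substitutions the `c`'s cancel, and the associator is absorbed by the left unitor,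
leaving `F(𝟙◁V) ◁ α_W ≫ α_V ▷ W = α_V ⊗ α_W`.
-/

open CategoryTheory MonoidalCategory

namespace Stmt15

/-- A right module category structure of a monoidal category `C` on a category `B`. -/
structure RightModCat (C B : Type*) [Category C] [Category B] [MonoidalCategory C] where
  act : B → C → B
  actMap : ∀ {b b' : B} {x x' : C}, (b ⟶ b') → (x ⟶ x') → (act b x ⟶ act b' x')
  actMap_id : ∀ (b : B) (x : C), actMap (𝟙 b) (𝟙 x) = 𝟙 (act b x)
  actMap_comp : ∀ {b₁ b₂ b₃ : B} {x₁ x₂ x₃ : C} (f : b₁ ⟶ b₂) (f' : b₂ ⟶ b₃)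
    (g : x₁ ⟶ x₂) (g' : x₂ ⟶ x₃),
    actMap (f ≫ f') (g ≫ g') = actMap f g ≫ actMap f' g'
  massoc : ∀ (b : B) (x y : C), act b (x ⊗ y) ≅ act (act b x) y
  massoc_natural : ∀ {b b' : B} {x x' y y' : C} (f : b ⟶ b') (g : x ⟶ x') (h : y ⟶ y'),
    actMap f (g ⊗ₘ h) ≫ (massoc b' x' y').hom = (massoc b x y).hom ≫ actMap (actMap f g) h
  runit : ∀ b : B, act b (𝟙_ C) ≅ b
  runit_natural : ∀ {b b' : B} (f : b ⟶ b'),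
    actMap f (𝟙 (𝟙_ C)) ≫ (runit b').hom = (runit b).hom ≫ f
  pentagon : ∀ (b : B) (x y z : C),
    actMap (𝟙 b) (α_ x y z).hom ≫ (massoc b x (y ⊗ z)).hom ≫ (massoc (act b x) y z).hom =
      (massoc b (x ⊗ y) z).hom ≫ actMap (massoc b x y).hom (𝟙 z)
  unit_act : ∀ (b : B) (x : C),
    (massoc b (𝟙_ C) x).hom ≫ actMap (runit b).hom (𝟙 x) = actMap (𝟙 b) (λ_ x).hom

/-- A *monoidal* right `C`-module category: a monoidal category `B` with a right
`C`-module structure together with compatibility isomorphisms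
`l_{b,x} : b ◁ x ≅ b ⊗ (𝟙_B ◁ x)` satisfying the coherence axioms. -/
structure MonModCat (C B : Type*) [Category C] [Category B] [MonoidalCategory C]
    [MonoidalCategory B] extends RightModCat C B where
  l : ∀ (b : B) (x : C), act b x ≅ b ⊗ act (𝟙_ B) x
  l_natural : ∀ {b b' : B} {x x' : C} (f : b ⟶ b') (g : x ⟶ x'),
    actMap f g ≫ (l b' x').hom = (l b x).hom ≫ (f ⊗ₘ actMap (𝟙 (𝟙_ B)) g)
  l_unit_right : ∀ b : B,
    (l b (𝟙_ C)).hom = (runit b).hom ≫ (ρ_ b).inv ≫ (𝟙 b ⊗ₘ (runit (𝟙_ B)).inv)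
  l_unit_left : ∀ x : C, (l (𝟙_ B) x).hom = (λ_ (act (𝟙_ B) x)).inv
  l_coherence : ∀ (b : B) (x y : C),
    (l (act b x) y).hom ≫ ((l b x).hom ⊗ₘ 𝟙 (act (𝟙_ B) y)) ≫
        (α_ b (act (𝟙_ B) x) (act (𝟙_ B) y)).hom =
      (massoc b x y).inv ≫ (l b (x ⊗ y)).hom ≫ (𝟙 b ⊗ₘ (massoc (𝟙_ B) x y).hom) ≫
        (𝟙 b ⊗ₘ (l (act (𝟙_ B) x) y).hom)

variable {C B : Type*} [Category C] [Category B] [MonoidalCategory C] [MonoidalCategory B]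

/-- The monoidal structure map of the section `G(V) = 𝟙_B ◁ V`. -/
def Gμ (M : MonModCat C B) (V W : C) :
    M.act (𝟙_ B) V ⊗ M.act (𝟙_ B) W ⟶ M.act (𝟙_ B) (V ⊗ W) :=
  (M.l (M.act (𝟙_ B) V) W).inv ≫ (M.massoc (𝟙_ B) V W).inv


lemma associator_hom_comp_whiskerRight_comp_leftUnitor_hom {D : Type*} [Category D]
    [MonoidalCategory D] {a : D} (e : a ⟶ 𝟙_ D) (V W : D) :
    (α_ a V W).hom ≫ e ▷ (V ⊗ W) ≫ (λ_ (V ⊗ W)).hom = (e ▷ V ≫ (λ_ V).hom) ▷ W := by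
  simp

section ModuleFunctor

variable (M : MonModCat C B) (F : B ⥤ C)
  (ξ : ∀ A A' : B, F.obj A ⊗ F.obj A' ≅ F.obj (A ⊗ A')) (εF : 𝟙_ C ≅ F.obj (𝟙_ B))
  (c : ∀ (b : B) (v : C), F.obj (M.act b v) ≅ F.obj b ⊗ v)

lemma c_inv_comp_map_massoc_inv
    (hc_coherence : ∀ (b : B) (v w : C),
      F.map (M.massoc b v w).hom ≫ (c (M.act b v) w).hom ≫ ((c b v).hom ⊗ₘ 𝟙 w) =
        (c b (v ⊗ w)).hom ≫ (α_ (F.obj b) v w).inv)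
    (b : B) (v w : C) :
    (c (M.act b v) w).inv ≫ F.map (M.massoc b v w).inv =
      (c b v).hom ▷ w ≫ (α_ (F.obj b) v w).hom ≫ (c b (v ⊗ w)).inv := by
  rw [← cancel_epi (c (M.act b v) w).hom, Iso.hom_inv_id_assoc,
    ← cancel_epi (F.map (M.massoc b v w).hom), ← F.map_comp, Iso.hom_inv_id,
    F.map_id]
  have h := hc_coherence b v w
  rw [tensorHom_id] at h
  simp [reassoc_of% h]

lemma ξ_hom_comp_map_l_inv
    (hcompat : ∀ (b : B) (v : C),
      (c b v).hom ≫ (𝟙 (F.obj b) ⊗ₘ ((λ_ v).inv ≫ (εF.hom ⊗ₘ 𝟙 v))) =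
        F.map (M.l b v).hom ≫ (ξ b (M.act (𝟙_ B) v)).inv ≫ (𝟙 (F.obj b) ⊗ₘ (c (𝟙_ B) v).hom))
    (b : B) (v : C) :
    (ξ b (M.act (𝟙_ B) v)).hom ≫ F.map (M.l b v).inv =
      F.obj b ◁ ((c (𝟙_ B) v).hom ≫ εF.inv ▷ v ≫ (λ_ v).hom) ≫ (c b v).inv := by
  rw [← cancel_epi (ξ b (M.act (𝟙_ B) v)).inv, Iso.inv_hom_id_assoc,
    ← cancel_epi (F.map (M.l b v).hom), ← F.map_comp, Iso.hom_inv_id, F.map_id]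
  have h := hcompat b v
  simp only [id_tensorHom, tensorHom_id] at h
  rw [MonoidalCategory.whiskerLeft_comp_assoc, ← reassoc_of% h]
  simp

end ModuleFunctor

theorem section_monoidal_nat_iso_general (M : MonModCat C B) (F : B ⥤ C)
    (ξ : ∀ A A' : B, F.obj A ⊗ F.obj A' ≅ F.obj (A ⊗ A'))
    (εF : 𝟙_ C ≅ F.obj (𝟙_ B))
    (c : ∀ (b : B) (v : C), F.obj (M.act b v) ≅ F.obj b ⊗ v)
    (hc_coherence : ∀ (b : B) (v w : C),
      F.map (M.massoc b v w).hom ≫ (c (M.act b v) w).hom ≫ ((c b v).hom ⊗ₘ 𝟙 w) =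
        (c b (v ⊗ w)).hom ≫ (α_ (F.obj b) v w).inv)
    (hcompat : ∀ (b : B) (v : C),
      (c b v).hom ≫ (𝟙 (F.obj b) ⊗ₘ ((λ_ v).inv ≫ (εF.hom ⊗ₘ 𝟙 v))) =
        F.map (M.l b v).hom ≫ (ξ b (M.act (𝟙_ B) v)).inv ≫ (𝟙 (F.obj b) ⊗ₘ (c (𝟙_ B) v).hom))
    (V W : C) :
    (ξ (M.act (𝟙_ B) V) (M.act (𝟙_ B) W)).hom ≫ F.map (Gμ M V W) ≫
        ((c (𝟙_ B) (V ⊗ W)).hom ≫ (εF.inv ⊗ₘ 𝟙 (V ⊗ W)) ≫ (λ_ (V ⊗ W)).hom) =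
      (((c (𝟙_ B) V).hom ≫ (εF.inv ⊗ₘ 𝟙 V) ≫ (λ_ V).hom) ⊗ₘ
        ((c (𝟙_ B) W).hom ≫ (εF.inv ⊗ₘ 𝟙 W) ≫ (λ_ W).hom)) := by
  rw [Gμ, F.map_comp, Category.assoc, reassoc_of% ξ_hom_comp_map_l_inv M F ξ εF c hcompat,
    reassoc_of% c_inv_comp_map_massoc_inv M F c hc_coherence, Iso.inv_hom_id_assoc]
  simp only [tensorHom_id, associator_hom_comp_whiskerRight_comp_leftUnitor_hom]
  rw [← comp_whiskerRight, tensorHom_def']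

/-- For a monoidal `C`-module functor `(F, ξ, c) : B ⥤ C` on a monoidal right `C`-module
category `B` satisfying the compatibility between `ξ`, `c` and `l`, the isomorphisms
`α_V := c_{𝟙,V}` (normalized by the unit constraint `εF`) form a *monoidal* natural
isomorphism `F ∘ G ≅ Id_C`, where `G(V) = 𝟙_B ◁ V` carries the monoidal structure
`l⁻¹_{𝟙◁V,W}`. -/
theorem section_monoidal_nat_iso (M : MonModCat C B) (F : B ⥤ C)
    (ξ : ∀ A A' : B, F.obj A ⊗ F.obj A' ≅ F.obj (A ⊗ A'))
    (εF : 𝟙_ C ≅ F.obj (𝟙_ B))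
    (hξ_natural : ∀ {A A' D D' : B} (f : A ⟶ D) (g : A' ⟶ D'),
      (F.map f ⊗ₘ F.map g) ≫ (ξ D D').hom = (ξ A A').hom ≫ F.map (f ⊗ₘ g))
    (hξ_assoc : ∀ A A' A'' : B,
      ((ξ A A').hom ⊗ₘ 𝟙 (F.obj A'')) ≫ (ξ (A ⊗ A') A'').hom ≫ F.map (α_ A A' A'').hom =
        (α_ (F.obj A) (F.obj A') (F.obj A'')).hom ≫ (𝟙 (F.obj A) ⊗ₘ (ξ A' A'').hom) ≫
          (ξ A (A' ⊗ A'')).hom)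
    (hξ_unit_left : ∀ A : B,
      (λ_ (F.obj A)).hom = (εF.hom ⊗ₘ 𝟙 (F.obj A)) ≫ (ξ (𝟙_ B) A).hom ≫ F.map (λ_ A).hom)
    (hξ_unit_right : ∀ A : B,
      (ρ_ (F.obj A)).hom = (𝟙 (F.obj A) ⊗ₘ εF.hom) ≫ (ξ A (𝟙_ B)).hom ≫ F.map (ρ_ A).hom)
    (c : ∀ (b : B) (v : C), F.obj (M.act b v) ≅ F.obj b ⊗ v)
    (hc_natural : ∀ {b b' : B} {v v' : C} (f : b ⟶ b') (g : v ⟶ v'),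
      F.map (M.actMap f g) ≫ (c b' v').hom = (c b v).hom ≫ (F.map f ⊗ₘ g))
    (hc_coherence : ∀ (b : B) (v w : C),
      F.map (M.massoc b v w).hom ≫ (c (M.act b v) w).hom ≫ ((c b v).hom ⊗ₘ 𝟙 w) =
        (c b (v ⊗ w)).hom ≫ (α_ (F.obj b) v w).inv)
    (hc_unit : ∀ b : B, F.map (M.runit b).hom = (c b (𝟙_ C)).hom ≫ (ρ_ (F.obj b)).hom)
    (hcompat : ∀ (b : B) (v : C),
      (c b v).hom ≫ (𝟙 (F.obj b) ⊗ₘ ((λ_ v).inv ≫ (εF.hom ⊗ₘ 𝟙 v))) =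
        F.map (M.l b v).hom ≫ (ξ b (M.act (𝟙_ B) v)).inv ≫ (𝟙 (F.obj b) ⊗ₘ (c (𝟙_ B) v).hom))
    (V W : C) :
    (ξ (M.act (𝟙_ B) V) (M.act (𝟙_ B) W)).hom ≫ F.map (Gμ M V W) ≫
        ((c (𝟙_ B) (V ⊗ W)).hom ≫ (εF.inv ⊗ₘ 𝟙 (V ⊗ W)) ≫ (λ_ (V ⊗ W)).hom) =
      (((c (𝟙_ B) V).hom ≫ (εF.inv ⊗ₘ 𝟙 V) ≫ (λ_ V).hom) ⊗ₘ
        ((c (𝟙_ B) W).hom ≫ (εF.inv ⊗ₘ 𝟙 W) ≫ (λ_ W).hom)) :=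
  section_monoidal_nat_iso_general M F ξ εF c hc_coherence hcompat V W

end Stmt15
end

section
/- Let C be a braided monoidal category with braiding σ and H a bimonoid in C. For left H-comodules (V, ρ_V) and (W, ρ_W), defining the coaction on V ⊗ W by the braided formula, the dinatural maps π_V := (id_H ⊗ ev_V) ∘ (ρ_V ⊗ id_{*V}) : V ⊗ *V → H satisfy: m ∘ (π_V ⊗ π_W ⊗ id_{V⊗W}) ∘ (id_{V ⊗ *V} ⊗ σ_{V, W ⊗ *W} ⊗ id_W) ∘ (id ⊗ coev_V ⊗ id ⊗ coev_W) = ρ_{V⊗W}, where ρ_{V⊗W} = (m ⊗ id) ∘ (id_H ⊗ σ_{V,H} ⊗ id_W) ∘ (ρ_V ⊗ ρ_W). -/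
open CategoryTheory MonoidalCategory

namespace Stmt16

/-- A bialgebra (bimonoid) object in a braided monoidal category. -/
structure Bialg (C : Type*) [Category C] [MonoidalCategory C] [BraidedCategory C] where
  X : C
  mul : X ⊗ X ⟶ X
  one : 𝟙_ C ⟶ X
  comul : X ⟶ X ⊗ X
  counit : X ⟶ 𝟙_ C
  mul_assoc : (mul ⊗ₘ 𝟙 X) ≫ mul = (α_ X X X).hom ≫ (𝟙 X ⊗ₘ mul) ≫ mul
  one_mul : (one ⊗ₘ 𝟙 X) ≫ mul = (λ_ X).hom
  mul_one : (𝟙 X ⊗ₘ one) ≫ mul = (ρ_ X).hom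
  comul_coassoc : comul ≫ (comul ⊗ₘ 𝟙 X) ≫ (α_ X X X).hom = comul ≫ (𝟙 X ⊗ₘ comul)
  counit_comul : comul ≫ (counit ⊗ₘ 𝟙 X) = (λ_ X).inv
  comul_counit : comul ≫ (𝟙 X ⊗ₘ counit) = (ρ_ X).inv
  mul_comul : mul ≫ comul = (comul ⊗ₘ comul) ≫ tensorμ X X X X ≫ (mul ⊗ₘ mul)
  one_comul : one ≫ comul = (λ_ (𝟙_ C)).inv ≫ (one ⊗ₘ one)
  mul_counit : mul ≫ counit = (counit ⊗ₘ counit) ≫ (λ_ (𝟙_ C)).hom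
  one_counit : one ≫ counit = 𝟙 (𝟙_ C)

variable {C : Type*} [Category C] [MonoidalCategory C] [BraidedCategory C]

/-- The dinatural map `π_V := (id_H ⊗ ev_V) ∘ (ρ_V ⊗ id_{ᘁV}) : V ⊗ ᘁV ⟶ H`. -/
def π (H : Bialg C) (V : C) [HasLeftDual V] (ρV : V ⟶ H.X ⊗ V) : V ⊗ (ᘁV : C) ⟶ H.X :=
  (ρV ⊗ₘ 𝟙 (ᘁV : C)) ≫ (α_ H.X V (ᘁV : C)).hom ≫ (𝟙 H.X ⊗ₘ ε_ (ᘁV : C) V) ≫ (ρ_ H.X).hom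

/-- Insertion of `coev_V` on the right of `V`, regrouped as `(V ⊗ ᘁV) ⊗ V`. -/
def ins (V : C) [HasLeftDual V] : V ⟶ (V ⊗ (ᘁV : C)) ⊗ V :=
  (ρ_ V).inv ≫ (𝟙 V ⊗ₘ η_ (ᘁV : C) V) ≫ (α_ V (ᘁV : C) V).inv

/-- After sliding `ρV` past `coev_V`, this is the zig-zag identity for `(ᘁV, V)` whiskered by `H`. -/
theorem ins_comp_π_tensorHom_id (H : Bialg C) (V : C) [HasLeftDual V] (ρV : V ⟶ H.X ⊗ V) :
    ins V ≫ (π H V ρV ⊗ₘ 𝟙 V) = ρV := by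
  simp only [ins, π, comp_whiskerRight, Category.assoc, tensorHom_id, id_tensorHom]
  rw [← associator_inv_naturality_left_assoc, whisker_exchange_assoc,
    ← rightUnitor_inv_naturality_assoc]
  calc _ = ρV ⊗≫ H.X ◁ (V ◁ η_ (ᘁV : C) V ⊗≫ ε_ (ᘁV : C) V ▷ V) ⊗≫ 𝟙 _ := by monoidal
    _ = ρV := by rw [ExactPairing.coevaluation_evaluation'']; monoidal

theorem pi_mul_eq_tensor_coaction_general (H : Bialg C) (V W : C) [HasLeftDual V] [HasLeftDual W]
    (ρV : V ⟶ H.X ⊗ V) (ρW : W ⟶ H.X ⊗ W) :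
    (ins V ⊗ₘ ins W) ≫ tensorμ (V ⊗ (ᘁV : C)) V (W ⊗ (ᘁW : C)) W ≫
        ((π H V ρV ⊗ₘ π H W ρW) ⊗ₘ 𝟙 (V ⊗ W)) ≫ (H.mul ⊗ₘ 𝟙 (V ⊗ W)) =
      (ρV ⊗ₘ ρW) ≫ tensorμ H.X V H.X W ≫ (H.mul ⊗ₘ 𝟙 (V ⊗ W)) := by
  rw [← id_tensorHom_id, ← tensorμ_natural_assoc, tensorHom_comp_tensorHom_assoc,
    ins_comp_π_tensorHom_id, ins_comp_π_tensorHom_id]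

/-- For comodules `V, W` over a bialgebra `H` in a braided category,
`m ∘ (π_V ⊗ π_W ⊗ id_{V⊗W}) ∘ (id_{V⊗ᘁV} ⊗ σ_{V,W⊗ᘁW} ⊗ id_W) ∘ (id ⊗ coev_V ⊗ id ⊗ coev_W)`
equals the braided tensor-product coaction
`ρ_{V⊗W} = (m ⊗ id) ∘ (id_H ⊗ σ_{V,H} ⊗ id_W) ∘ (ρ_V ⊗ ρ_W)`. -/
theorem pi_mul_eq_tensor_coaction (H : Bialg C) (V W : C) [HasLeftDual V] [HasLeftDual W]
    (ρV : V ⟶ H.X ⊗ V) (ρW : W ⟶ H.X ⊗ W)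
    (hρV_coassoc : ρV ≫ (H.comul ⊗ₘ 𝟙 V) ≫ (α_ H.X H.X V).hom = ρV ≫ (𝟙 H.X ⊗ₘ ρV))
    (hρV_counit : ρV ≫ (H.counit ⊗ₘ 𝟙 V) = (λ_ V).inv)
    (hρW_coassoc : ρW ≫ (H.comul ⊗ₘ 𝟙 W) ≫ (α_ H.X H.X W).hom = ρW ≫ (𝟙 H.X ⊗ₘ ρW))
    (hρW_counit : ρW ≫ (H.counit ⊗ₘ 𝟙 W) = (λ_ W).inv) :
    (ins V ⊗ₘ ins W) ≫ tensorμ (V ⊗ (ᘁV : C)) V (W ⊗ (ᘁW : C)) W ≫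
        ((π H V ρV ⊗ₘ π H W ρW) ⊗ₘ 𝟙 (V ⊗ W)) ≫ (H.mul ⊗ₘ 𝟙 (V ⊗ W)) =
      (ρV ⊗ₘ ρW) ≫ tensorμ H.X V H.X W ≫ (H.mul ⊗ₘ 𝟙 (V ⊗ W)) :=
  pi_mul_eq_tensor_coaction_general H V W ρV ρW

end Stmt16
end
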